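/- (Compositionality for generalised composition, unbounded time) Let 𝕊 and 𝕊′ be quantum systems with disjoint command sets C ∩ C′ = ∅, and let ↝ (on A) and ↝′ (on A′) be compatible policies. Let 𝕋 be a generalised composition of 𝕊 and 𝕊′ whose initial state σ0 is separable and all of whose super-operators 𝓕_{a,c} are commutative and separable. Then K(𝕋, ↝ ∪ ↝′) ≤ SK(𝕊, ↝) + SK(𝕊′, ↝′). -/

import Mathlib

open scoped Classical ComplexOrder
open Matrix Kronecker

noncomputable section

/-- A density operator: positive semidefinite with trace 1. -/
def IsDensity {d : Type} [Fintype d] [DecidableEq d] (ρ : Matrix d d ℂ) : Prop :=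
  ρ.PosSemidef ∧ ρ.trace = 1

/-- A super-operator: a linear, positive, trace-preserving map on matrices. -/
def IsSuperOp {d : Type} [Fintype d] [DecidableEq d]
    (F : Matrix d d ℂ → Matrix d d ℂ) : Prop :=
  IsLinearMap ℂ F ∧ (∀ ρ : Matrix d d ℂ, ρ.PosSemidef → (F ρ).PosSemidef) ∧
    (∀ ρ : Matrix d d ℂ, (F ρ).trace = ρ.trace)

/-- A finite family of matrices (the data of a measurement). -/
structure PMeas (d : Type) where
  m : ℕ
  E : Fin m → Matrix d d ℂ

/-- The family is a POVM: positive semidefinite elements summing to the identity. -/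
def PMeas.IsPOVM {d : Type} [Fintype d] [DecidableEq d] (P : PMeas d) : Prop :=
  (∀ i, (P.E i).PosSemidef) ∧ ∑ i, P.E i = 1

/-- The distance between outcome distributions of a measurement on two states. -/
def dE {d : Type} [Fintype d] (P : PMeas d) (ρ σ : Matrix d d ℂ) : ℝ :=
  (1 / 2) * ∑ i, ‖(P.E i * ρ).trace - (P.E i * σ).trace‖

/-- The measurement pseudo-distance induced by a set of measurements. -/
def dM {d : Type} [Fintype d] (M : Set (PMeas d)) (ρ σ : Matrix d d ℂ) : ℝ :=
  sSup { x | ∃ P ∈ M, x = dE P ρ σ }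

/-- A quantum system: initial state, agents, commands, super-operators, measurements. -/
structure QSystem (Agent Cmd d : Type) where
  ρ0 : Matrix d d ℂ
  A : Set Agent
  C : Set Cmd
  Ecmd : Agent → Cmd → Matrix d d ℂ → Matrix d d ℂ
  M : Agent → Set (PMeas d)

/-- Well-formedness: the initial state is a density operator, commands act as
super-operators, and agents measure with POVMs. -/
def QSystem.WellFormed {Agent Cmd d : Type} [Fintype d] [DecidableEq d]
    (S : QSystem Agent Cmd d) : Prop :=
  IsDensity S.ρ0 ∧ (∀ a ∈ S.A, ∀ c ∈ S.C, IsSuperOp (S.Ecmd a c)) ∧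
    (∀ a ∈ S.A, ∀ P ∈ S.M a, P.IsPOVM)

/-- Execution of a finite action sequence (composition of super-operators, in order). -/
def QSystem.run {Agent Cmd d : Type} (S : QSystem Agent Cmd d)
    (α : List (Agent × Cmd)) (ρ : Matrix d d ℂ) : Matrix d d ℂ :=
  α.foldl (fun τ p => S.Ecmd p.1 p.2 τ) ρ

/-- A sequence over A × C. -/
def QSystem.Valid {Agent Cmd d : Type} (S : QSystem Agent Cmd d)
    (α : List (Agent × Cmd)) : Prop :=
  ∀ p ∈ α, p.1 ∈ S.A ∧ p.2 ∈ S.C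

/-- `purge G D α` deletes from `α` every pair `(a, c)` with `a ∈ G` and `c ∈ D`. -/
def purge {Agent Cmd : Type} (G : Set Agent) (D : Set Cmd) :
    List (Agent × Cmd) → List (Agent × Cmd)
  | [] => []
  | p :: rest => if p.1 ∈ G ∧ p.2 ∈ D then purge G D rest else p :: purge G D rest

/-- A reachable density operator. -/
def QSystem.Reachable {Agent Cmd d : Type} (S : QSystem Agent Cmd d)
    (ρ : Matrix d d ℂ) : Prop :=
  ∃ α, S.Valid α ∧ S.run α S.ρ0 = ρ

/-- `∇ a`: the set of agents from which information may not flow to `a`. -/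
def nabla {Agent : Type} (pol : Agent → Agent → Prop) (a : Agent) : Set Agent :=
  { b | ¬ pol b a }

/-- The security degree `K(𝕊,↝)`. -/
def Kdeg {Agent Cmd d : Type} [Fintype d] (S : QSystem Agent Cmd d)
    (pol : Agent → Agent → Prop) : ℝ :=
  sSup { x | ∃ a ∈ S.A, ∃ α, S.Valid α ∧
    x = dM (S.M a) (S.run α S.ρ0) (S.run (purge (nabla pol a) Set.univ α) S.ρ0) }

/-- The `t`-bounded security degree `K_t(𝕊,↝)`. -/
def Kt {Agent Cmd d : Type} [Fintype d] (S : QSystem Agent Cmd d)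
    (pol : Agent → Agent → Prop) (t : ℕ) : ℝ :=
  sSup { x | ∃ a ∈ S.A, ∃ α, S.Valid α ∧ α.length ≤ t ∧
    x = dM (S.M a) (S.run α S.ρ0) (S.run (purge (nabla pol a) Set.univ α) S.ρ0) }

/-- The interference degree `Int(G₁, D | G₂)`. -/
def IntDeg {Agent Cmd d : Type} [Fintype d] (S : QSystem Agent Cmd d)
    (G1 : Set Agent) (D : Set Cmd) (G2 : Set Agent) : ℝ :=
  sSup { x | ∃ a ∈ G2, ∃ α, S.Valid α ∧
    x = dM (S.M a) (S.run α S.ρ0) (S.run (purge G1 D α) S.ρ0) }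

/-- Trace distance `d(ρ,σ) = (1/2)·tr √((ρ−σ)†(ρ−σ))`. -/
def traceDist {d : Type} [Fintype d] [DecidableEq d] (ρ σ : Matrix d d ℂ) : ℝ :=
  (1 / 2) * (((Matrix.posSemidef_conjTranspose_mul_self (ρ - σ)).isHermitian.eigenvectorUnitary.1 *
    Matrix.diagonal (fun i => ((Real.sqrt
      ((Matrix.posSemidef_conjTranspose_mul_self (ρ - σ)).isHermitian.eigenvalues i) : ℝ) : ℂ)) *
    (star (Matrix.posSemidef_conjTranspose_mul_self (ρ - σ)).isHermitian.eigenvectorUnitary :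
      Matrix d d ℂ)).trace).re

end
noncomputable section

/-- Partial trace over the second factor: `(tr₂ σ)(i,j) = ∑_k σ((i,k),(j,k))`. -/
def ptrace2 {d1 d2 : Type} [Fintype d2]
    (σ : Matrix (d1 × d2) (d1 × d2) ℂ) : Matrix d1 d1 ℂ :=
  Matrix.of fun i j => ∑ k, σ (i, k) (j, k)

/-- Partial trace over the first factor: `(tr₁ σ)(k,l) = ∑_i σ((i,k),(i,l))`. -/
def ptrace1 {d1 d2 : Type} [Fintype d1]
    (σ : Matrix (d1 × d2) (d1 × d2) ℂ) : Matrix d2 d2 ℂ :=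
  Matrix.of fun k l => ∑ i, σ (i, k) (i, l)

/-- `𝓕` is a cylindrical extension of `𝓔` (acting on the first factor). -/
def CylExtLeft {n n' : ℕ}
    (E : Matrix (Fin n) (Fin n) ℂ → Matrix (Fin n) (Fin n) ℂ)
    (F : Matrix (Fin n × Fin n') (Fin n × Fin n') ℂ →
         Matrix (Fin n × Fin n') (Fin n × Fin n') ℂ) : Prop :=
  (∀ ρ : Matrix (Fin n) (Fin n) ℂ, IsDensity ρ →
    ptrace2 (F (ρ ⊗ₖ (((n' : ℂ))⁻¹ • (1 : Matrix (Fin n') (Fin n') ℂ)))) = E ρ) ∧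
  (∀ ρ' : Matrix (Fin n') (Fin n') ℂ, IsDensity ρ' →
    ptrace1 (F ((((n : ℂ))⁻¹ • (1 : Matrix (Fin n) (Fin n) ℂ)) ⊗ₖ ρ')) = ρ')

/-- `𝓕` is a cylindrical extension of `𝓔′` (acting on the second factor). -/
def CylExtRight {n n' : ℕ}
    (E' : Matrix (Fin n') (Fin n') ℂ → Matrix (Fin n') (Fin n') ℂ)
    (F : Matrix (Fin n × Fin n') (Fin n × Fin n') ℂ →
         Matrix (Fin n × Fin n') (Fin n × Fin n') ℂ) : Prop :=
  (∀ ρ' : Matrix (Fin n') (Fin n') ℂ, IsDensity ρ' →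
    ptrace1 (F ((((n : ℂ))⁻¹ • (1 : Matrix (Fin n) (Fin n) ℂ)) ⊗ₖ ρ')) = E' ρ') ∧
  (∀ ρ : Matrix (Fin n) (Fin n) ℂ, IsDensity ρ →
    ptrace2 (F (ρ ⊗ₖ (((n' : ℂ))⁻¹ • (1 : Matrix (Fin n') (Fin n') ℂ)))) = ρ)

/-- A separable state on the composite system. -/
def SeparableState {d1 d2 : Type} [Fintype d1] [DecidableEq d1]
    [Fintype d2] [DecidableEq d2] (σ : Matrix (d1 × d2) (d1 × d2) ℂ) : Prop :=
  ∃ (m : ℕ) (p : Fin m → ℝ) (ρ : Fin m → Matrix d1 d1 ℂ)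
    (ρ' : Fin m → Matrix d2 d2 ℂ),
    (∀ i, 0 ≤ p i) ∧ (∑ i, p i = 1) ∧
    (∀ i, IsDensity (ρ i)) ∧ (∀ i, IsDensity (ρ' i)) ∧
    σ = ∑ i, (p i : ℂ) • (ρ i ⊗ₖ ρ' i)

/-- A commutative separable super-operator on the composite system:
`𝓕(σ) = ∑_i (F_i ⊗ F_i′) σ (F_i† ⊗ F_i′†)` with each family commuting. -/
def CommSeparableOp {d1 d2 : Type} [Fintype d1] [Fintype d2]
    (F : Matrix (d1 × d2) (d1 × d2) ℂ → Matrix (d1 × d2) (d1 × d2) ℂ) : Prop :=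
  ∃ (m : ℕ) (G : Fin m → Matrix d1 d1 ℂ) (G' : Fin m → Matrix d2 d2 ℂ),
    (∀ i j, G i * G j = G j * G i) ∧ (∀ i j, G' i * G' j = G' j * G' i) ∧
    ∀ σ, F σ = ∑ i, (G i ⊗ₖ G' i) * σ * (G i ⊗ₖ G' i)ᴴ

/-- Lift a measurement on the first subsystem to the composite system: `E_λ ↦ E_λ ⊗ I`. -/
def PMeas.liftLeft {d1 d2 : Type} [Fintype d2] [DecidableEq d2]
    (P : PMeas d1) : PMeas (d1 × d2) where
  m := P.m
  E := fun i => P.E i ⊗ₖ (1 : Matrix d2 d2 ℂ)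

/-- Lift a measurement on the second subsystem to the composite system: `E_λ ↦ I ⊗ E_λ`. -/
def PMeas.liftRight {d1 d2 : Type} [Fintype d1] [DecidableEq d1]
    (P : PMeas d2) : PMeas (d1 × d2) where
  m := P.m
  E := fun i => (1 : Matrix d1 d1 ℂ) ⊗ₖ P.E i

/-- `𝕋` is a generalised composition of `𝕊` and `𝕊′`. -/
def IsGenComp {Agent Cmd : Type} {n n' : ℕ}
    (S : QSystem Agent Cmd (Fin n)) (S' : QSystem Agent Cmd (Fin n'))
    (T : QSystem Agent Cmd (Fin n × Fin n')) : Prop :=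
  T.A = S.A ∪ S'.A ∧ T.C = S.C ∪ S'.C ∧
  IsDensity T.ρ0 ∧ ptrace2 T.ρ0 = S.ρ0 ∧ ptrace1 T.ρ0 = S'.ρ0 ∧
  (∀ a c, ((a ∈ S.A \ S'.A ∧ c ∈ S'.C) ∨ (a ∈ S'.A \ S.A ∧ c ∈ S.C)) →
    T.Ecmd a c = id) ∧
  (∀ a ∈ S.A, ∀ c ∈ S.C, CylExtLeft (S.Ecmd a c) (T.Ecmd a c)) ∧
  (∀ a ∈ S'.A, ∀ c ∈ S'.C, CylExtRight (S'.Ecmd a c) (T.Ecmd a c)) ∧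
  (∀ a, T.M a =
    (if a ∈ S.A then PMeas.liftLeft '' S.M a else ∅) ∪
    (if a ∈ S'.A then PMeas.liftRight '' S'.M a else ∅))

/-- `𝕊[ρ′]`: the system `𝕊` with its initial state replaced by `ρ′`. -/
def QSystem.withInit {Agent Cmd d : Type} (S : QSystem Agent Cmd d)
    (ρ : Matrix d d ℂ) : QSystem Agent Cmd d :=
  { S with ρ0 := ρ }

/-- The strong security degree `SK(𝕊,↝)`. -/
def SK {Agent Cmd d : Type} [Fintype d] [DecidableEq d]
    (S : QSystem Agent Cmd d) (pol : Agent → Agent → Prop) : ℝ :=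
  sSup { x | ∃ (m : ℕ) (p : Fin m → ℝ) (ρ : Fin m → Matrix d d ℂ),
    (∀ i, 0 ≤ p i) ∧ (∑ i, p i = 1) ∧ (∀ i, IsDensity (ρ i)) ∧
    S.ρ0 = ∑ i, (p i : ℂ) • ρ i ∧
    x = ∑ i, p i * Kdeg (S.withInit (ρ i)) pol }

/-- The strong `t`-bounded security degree `SK_t(𝕊,↝)`. -/
def SKt {Agent Cmd d : Type} [Fintype d] [DecidableEq d]
    (S : QSystem Agent Cmd d) (pol : Agent → Agent → Prop) (t : ℕ) : ℝ :=
  sSup { x | ∃ (m : ℕ) (p : Fin m → ℝ) (ρ : Fin m → Matrix d d ℂ),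
    (∀ i, 0 ≤ p i) ∧ (∑ i, p i = 1) ∧ (∀ i, IsDensity (ρ i)) ∧
    S.ρ0 = ∑ i, (p i : ℂ) • ρ i ∧
    x = ∑ i, p i * Kt (S.withInit (ρ i)) pol t }

/-- Two policies are compatible if they agree on common agents. -/
def Compatible {Agent : Type} (A A' : Set Agent)
    (pol pol' : Agent → Agent → Prop) : Prop :=
  ∀ a ∈ A ∩ A', ∀ b ∈ A ∩ A', (pol a b ↔ pol' a b)

/-- The union `↝ ∪ ↝′` of a policy on `A` and a policy on `A′`. -/
def polUnion {Agent : Type} (A A' : Set Agent)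
    (pol pol' : Agent → Agent → Prop) : Agent → Agent → Prop :=
  fun a b => (a ∈ A ∧ b ∈ A ∧ pol a b) ∨ (a ∈ A' ∧ b ∈ A' ∧ pol' a b)

end

/-!
Write a separable super-operator as `𝓕 σ = ∑ᵢ (Gᵢ ⊗ Gᵢ') σ (Gᵢ ⊗ Gᵢ')ᴴ`. If `𝓕` is a cylindrical
extension of `𝓔`, tracing out the first factor of `𝓕((1/n)·I ⊗ ρ')` is the identity channel on
`ρ'`, with Kraus operators `Gᵢ'` weighted by `tr(Gᵢ Gᵢᴴ)/n`. The Kraus operators of the identity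
channel are scalars, so `Gᵢ ⊗ Gᵢ' = Hᵢ ⊗ I` and `𝓕 (ρ ⊗ ρ') = 𝓔 ρ ⊗ ρ'`; symmetrically for
extensions of `𝓔'`. Since the command sets are disjoint, running `α` in `𝕋` from the separable
state `∑ pᵢ ρᵢ ⊗ ρᵢ'` gives `∑ pᵢ 𝓔_{α|𝕊}(ρᵢ) ⊗ 𝓔'_{α|𝕊'}(ρᵢ')`, and by compatibility of the
policies purging `∇a` for `↝ ∪ ↝'` commutes with restriction to either component. A measurement
`E ⊗ I` only sees the first factors, so by convexity of `d_E` its distance is at most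
`∑ pᵢ K(𝕊[ρᵢ], ↝) ≤ SK(𝕊, ↝)`, because `∑ pᵢ ρᵢ = tr₂ σ₀ = ρ₀`; symmetrically for `I ⊗ E`.
-/

noncomputable section

section MatrixFacts

variable {d d₁ d₂ : Type} [Fintype d]

lemma Matrix.PosSemidef.trace_mul_nonneg {A B : Matrix d d ℂ} (hA : A.PosSemidef)
    (hB : B.PosSemidef) : 0 ≤ (A * B).trace := by
  open scoped MatrixOrder in
  obtain ⟨C, rfl⟩ := CStarAlgebra.nonneg_iff_eq_star_mul_self.mp hA.nonneg
  rw [star_eq_conjTranspose, Matrix.mul_assoc, trace_mul_comm]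
  exact (hB.mul_mul_conjTranspose_same C).trace_nonneg

lemma Matrix.sum_kronecker {ι : Type} [Fintype ι] (A : ι → Matrix d₁ d₁ ℂ)
    (B : Matrix d₂ d₂ ℂ) : (∑ i, A i) ⊗ₖ B = ∑ i, A i ⊗ₖ B := by
  ext
  simp [kroneckerMap_apply, sum_apply, Finset.sum_mul]

lemma Matrix.kronecker_sum {ι : Type} [Fintype ι] (A : Matrix d₁ d₁ ℂ)
    (B : ι → Matrix d₂ d₂ ℂ) : A ⊗ₖ (∑ i, B i) = ∑ i, A ⊗ₖ B i := by
  ext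
  simp [kroneckerMap_apply, sum_apply, Finset.mul_sum]

lemma Matrix.kronecker_conj [Fintype d₁] [Fintype d₂] (G X : Matrix d₁ d₁ ℂ)
    (G' Y : Matrix d₂ d₂ ℂ) :
    (G ⊗ₖ G') * (X ⊗ₖ Y) * (G ⊗ₖ G')ᴴ = (G * X * Gᴴ) ⊗ₖ (G' * Y * G'ᴴ) := by
  rw [conjTranspose_kronecker, ← mul_kronecker_mul, ← mul_kronecker_mul]

lemma exists_eq_smul_of_forall_dotProduct_eq_zero {v w : d → ℂ} (hv : v ≠ 0)
    (h : ∀ u, star v ⬝ᵥ u = 0 → star w ⬝ᵥ u = 0) : ∃ c : ℂ, w = c • v := by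
  have hvv : star v ⬝ᵥ v ≠ 0 := fun h0 => hv (dotProduct_star_self_eq_zero.mp h0)
  set c := (star v ⬝ᵥ w) / (star v ⬝ᵥ v)
  set u := w - c • v
  have hvu : star v ⬝ᵥ u = 0 := by
    simp only [u, dotProduct_sub, dotProduct_smul, smul_eq_mul, c]
    field_simp
    ring
  have huu : star u ⬝ᵥ u = 0 := by
    rw [show star u = star w - star c • star v by simp [u, star_smul], sub_dotProduct,
      smul_dotProduct, h u hvu, hvu, smul_zero, sub_zero]
  exact ⟨c, sub_eq_zero.mp (dotProduct_star_self_eq_zero.mp huu)⟩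

lemma star_dotProduct_vecMulVec_mulVec (y u : d → ℂ) :
    star u ⬝ᵥ (vecMulVec y (star y) *ᵥ u) = star (star y ⬝ᵥ u) * (star y ⬝ᵥ u) := by
  rw [vecMulVec_mulVec, op_smul_eq_smul, dotProduct_smul, smul_eq_mul, mul_comm,
    ← star_dotProduct]

end MatrixFacts

section KrausIdentity

variable {d ι : Type} [Fintype d] [DecidableEq d] [Fintype ι] {w : ι → ℂ}
  {K : ι → Matrix d d ℂ}

lemma sum_smul_vecMulVec_eq_of_sum_smul_conj_eq_self
    (hK : ∀ ρ, IsDensity ρ → ∑ i, w i • (K i * ρ * (K i)ᴴ) = ρ) (v : d → ℂ) :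
    ∑ i, w i • vecMulVec (K i *ᵥ v) (star (K i *ᵥ v)) = vecMulVec v (star v) := by
  by_cases hv : v = 0
  · simp [hv]
  set t := star v ⬝ᵥ v
  have ht : t ≠ 0 := fun h => hv (dotProduct_star_self_eq_zero.mp h)
  have hρ : IsDensity (t⁻¹ • vecMulVec v (star v)) :=
    ⟨(posSemidef_vecMulVec_self_star v).smul (inv_nonneg.mpr (dotProduct_star_self_nonneg v)),
      by rw [trace_smul, trace_vecMulVec, dotProduct_comm, smul_eq_mul, inv_mul_cancel₀ ht]⟩
  have hconj : ∀ i, K i * vecMulVec v (star v) * (K i)ᴴ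
      = vecMulVec (K i *ᵥ v) (star (K i *ᵥ v)) := fun i => by
    rw [mul_vecMulVec, vecMulVec_mul, star_mulVec]
  have h := hK _ hρ
  simp only [Matrix.mul_smul, Matrix.smul_mul, hconj, smul_comm (w _) t⁻¹,
    ← Finset.smul_sum] at h
  exact smul_right_injective _ (inv_ne_zero ht) h

lemma exists_eq_smul_one_of_sum_smul_conj_eq_self (hw : ∀ i, 0 ≤ w i)
    (hK : ∀ ρ, IsDensity ρ → ∑ i, w i • (K i * ρ * (K i)ᴴ) = ρ) {i : ι} (hi : w i ≠ 0) :
    ∃ z : ℂ, K i = z • 1 := by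
  have heig : ∀ v, ¬ LinearIndependent ℂ ![v, K i *ᵥ v] := by
    intro v
    by_cases hv : v = 0
    · rw [hv]
      exact fun h => h.ne_zero 0 rfl
    suffices ∃ c : ℂ, K i *ᵥ v = c • v by
      obtain ⟨c, hc⟩ := this
      rw [LinearIndependent.pair_iff' hv]
      exact fun h => h c hc.symm
    -- For `u ⊥ v`, the quadratic form of `u` on the rank-one identity is a vanishing sum
    -- of the nonnegative terms `w j ‖⟪K j v, u⟫‖²`.
    refine exists_eq_smul_of_forall_dotProduct_eq_zero hv fun u hu => ?_
    have hsum := congrArg (fun M => star u ⬝ᵥ (M *ᵥ u))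
      (sum_smul_vecMulVec_eq_of_sum_smul_conj_eq_self hK v)
    simp only [sum_mulVec, smul_mulVec, dotProduct_sum, dotProduct_smul,
      star_dotProduct_vecMulVec_mulVec, hu, mul_zero, smul_eq_mul] at hsum
    have hterm := (Finset.sum_eq_zero_iff_of_nonneg fun j _ =>
      mul_nonneg (hw j) (star_mul_self_nonneg _)).mp hsum i (Finset.mem_univ i)
    exact (CStarRing.star_mul_self_eq_zero_iff _).mp ((mul_eq_zero.mp hterm).resolve_left hi)
  obtain ⟨z, hz⟩ := LinearMap.exists_eq_smul_id_of_forall_notLinearIndependent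
    (f := toLin' (K i)) (by simpa using heig)
  exact ⟨z, toLin'.injective (by rw [hz, map_smul, toLin'_one]; rfl)⟩

end KrausIdentity

section PartialTrace

variable {d₁ d₂ ι : Type}

lemma ptrace2_kronecker [Fintype d₂] (A : Matrix d₁ d₁ ℂ) (B : Matrix d₂ d₂ ℂ) :
    ptrace2 (A ⊗ₖ B) = B.trace • A := by
  ext
  simp [ptrace2, trace, Finset.mul_sum, mul_comm]

lemma ptrace1_kronecker [Fintype d₁] (A : Matrix d₁ d₁ ℂ) (B : Matrix d₂ d₂ ℂ) :
    ptrace1 (A ⊗ₖ B) = A.trace • B := by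
  ext
  simp [ptrace1, trace, Finset.sum_mul]

lemma ptrace2_sum [Fintype d₂] (s : Finset ι) (σ : ι → Matrix (d₁ × d₂) (d₁ × d₂) ℂ) :
    ptrace2 (∑ i ∈ s, σ i) = ∑ i ∈ s, ptrace2 (σ i) := by
  ext
  simp only [ptrace2, Matrix.sum_apply, of_apply]
  rw [Finset.sum_comm]

lemma ptrace1_sum [Fintype d₁] (s : Finset ι) (σ : ι → Matrix (d₁ × d₂) (d₁ × d₂) ℂ) :
    ptrace1 (∑ i ∈ s, σ i) = ∑ i ∈ s, ptrace1 (σ i) := by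
  ext
  simp only [ptrace1, Matrix.sum_apply, of_apply]
  rw [Finset.sum_comm]

lemma ptrace2_smul [Fintype d₂] (c : ℂ) (σ : Matrix (d₁ × d₂) (d₁ × d₂) ℂ) :
    ptrace2 (c • σ) = c • ptrace2 σ := by
  ext
  simp [ptrace2, Finset.mul_sum]

lemma ptrace1_smul [Fintype d₁] (c : ℂ) (σ : Matrix (d₁ × d₂) (d₁ × d₂) ℂ) :
    ptrace1 (c • σ) = c • ptrace1 σ := by
  ext
  simp [ptrace1, Finset.mul_sum]

lemma ptrace2_sum_smul_kronecker [Fintype d₂] [Fintype ι] (c : ι → ℂ) (ρ : ι → Matrix d₁ d₁ ℂ)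
    {ρ' : ι → Matrix d₂ d₂ ℂ} (hρ' : ∀ i, (ρ' i).trace = 1) :
    ptrace2 (∑ i, c i • (ρ i ⊗ₖ ρ' i)) = ∑ i, c i • ρ i := by
  simp only [ptrace2_sum, ptrace2_smul, ptrace2_kronecker, hρ', one_smul]

lemma ptrace1_sum_smul_kronecker [Fintype d₁] [Fintype ι] (c : ι → ℂ)
    {ρ : ι → Matrix d₁ d₁ ℂ} (hρ : ∀ i, (ρ i).trace = 1) (ρ' : ι → Matrix d₂ d₂ ℂ) :
    ptrace1 (∑ i, c i • (ρ i ⊗ₖ ρ' i)) = ∑ i, c i • ρ' i := by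
  simp only [ptrace1_sum, ptrace1_smul, ptrace1_kronecker, hρ, one_smul]

end PartialTrace

section CylindricalExtension

lemma trace_inv_natCast_smul_one {n : ℕ} (hn : 0 < n) :
    ((n : ℂ)⁻¹ • (1 : Matrix (Fin n) (Fin n) ℂ)).trace = 1 := by
  rw [trace_smul, trace_one, Fintype.card_fin, smul_eq_mul,
    inv_mul_cancel₀ (by exact_mod_cast hn.ne')]

lemma CommSeparableOp.isLinearMap {d₁ d₂ : Type} [Fintype d₁] [Fintype d₂]
    {F : Matrix (d₁ × d₂) (d₁ × d₂) ℂ → Matrix (d₁ × d₂) (d₁ × d₂) ℂ}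
    (hF : CommSeparableOp F) : IsLinearMap ℂ F := by
  obtain ⟨m, G, G', -, -, hF⟩ := hF
  exact ⟨fun σ τ => by simp [hF, Matrix.mul_add, Matrix.add_mul, Finset.sum_add_distrib],
    fun c σ => by simp [hF, Finset.smul_sum]⟩

/-- The hypothesis is what tracing out the first factor of `𝓕((1/n)·I ⊗ ρ')` gives for
`𝓕 σ = ∑ (G i ⊗ G' i) σ (G i ⊗ G' i)ᴴ` when `𝓕` is a cylindrical extension. -/
lemma exists_eq_smul_one_of_sum_trace_smul_conj_eq_self {n m : ℕ} {d : Type} [Fintype d]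
    [DecidableEq d] (hn : 0 < n) (G : Fin m → Matrix (Fin n) (Fin n) ℂ)
    (G' : Fin m → Matrix d d ℂ)
    (h : ∀ ρ', IsDensity ρ' →
      ∑ i, (G i * ((n : ℂ)⁻¹ • 1) * (G i)ᴴ).trace • (G' i * ρ' * (G' i)ᴴ) = ρ')
    {i : Fin m} (hG : G i ≠ 0) : ∃ z : ℂ, G' i = z • 1 := by
  have hw : ∀ j, (G j * ((n : ℂ)⁻¹ • 1) * (G j)ᴴ).trace
      = (n : ℂ)⁻¹ * (G j * (G j)ᴴ).trace := fun j => by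
    rw [Matrix.mul_smul, Matrix.mul_one, Matrix.smul_mul, trace_smul, smul_eq_mul]
  simp only [hw] at h
  refine exists_eq_smul_one_of_sum_smul_conj_eq_self (fun j => ?_) h ?_
  · exact mul_nonneg (inv_nonneg.mpr (Nat.cast_nonneg n))
      (posSemidef_self_mul_conjTranspose _).trace_nonneg
  · exact mul_ne_zero (inv_ne_zero (by exact_mod_cast hn.ne'))
      (mt trace_mul_conjTranspose_self_eq_zero_iff.mp hG)

variable {n n' : ℕ} {F : Matrix (Fin n × Fin n') (Fin n × Fin n') ℂ →
  Matrix (Fin n × Fin n') (Fin n × Fin n') ℂ}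

lemma CommSeparableOp.apply_kronecker_of_cylExtLeft (hn : 0 < n) (hn' : 0 < n')
    {E : Matrix (Fin n) (Fin n) ℂ → Matrix (Fin n) (Fin n) ℂ} (hF : CommSeparableOp F)
    (hcyl : CylExtLeft E F) {ρ : Matrix (Fin n) (Fin n) ℂ} (hρ : IsDensity ρ)
    (ρ' : Matrix (Fin n') (Fin n') ℂ) : F (ρ ⊗ₖ ρ') = E ρ ⊗ₖ ρ' := by
  obtain ⟨m, G, G', -, -, hF⟩ := hF
  have hid : ∀ ρ', IsDensity ρ' →
      ∑ i, (G i * ((n : ℂ)⁻¹ • 1) * (G i)ᴴ).trace • (G' i * ρ' * (G' i)ᴴ) = ρ' :=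
    fun ρ' hρ' => by
      conv_rhs => rw [← hcyl.2 ρ' hρ', hF]
      simp [ptrace1_sum, kronecker_conj, ptrace1_kronecker]
  have hfactor : ∀ i, ∃ H, G i ⊗ₖ G' i = H ⊗ₖ (1 : Matrix (Fin n') (Fin n') ℂ) := fun i => by
    by_cases hG : G i = 0
    · exact ⟨0, by simp [hG]⟩
    obtain ⟨z, hz⟩ := exists_eq_smul_one_of_sum_trace_smul_conj_eq_self hn G G' hid hG
    exact ⟨z • G i, by rw [hz, kronecker_smul, smul_kronecker]⟩
  choose H hH using hfactor
  have hprod : ∀ σ', F (ρ ⊗ₖ σ') = (∑ i, H i * ρ * (H i)ᴴ) ⊗ₖ σ' := fun σ' => by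
    simp [hF, hH, kronecker_conj, sum_kronecker]
  rw [hprod, ← hcyl.1 ρ hρ, hprod, ptrace2_kronecker, trace_inv_natCast_smul_one hn', one_smul]

lemma CommSeparableOp.apply_kronecker_of_cylExtRight (hn : 0 < n) (hn' : 0 < n')
    {E' : Matrix (Fin n') (Fin n') ℂ → Matrix (Fin n') (Fin n') ℂ} (hF : CommSeparableOp F)
    (hcyl : CylExtRight E' F) (ρ : Matrix (Fin n) (Fin n) ℂ) {ρ' : Matrix (Fin n') (Fin n') ℂ}
    (hρ' : IsDensity ρ') : F (ρ ⊗ₖ ρ') = ρ ⊗ₖ E' ρ' := by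
  obtain ⟨m, G, G', -, -, hF⟩ := hF
  have hid : ∀ ρ, IsDensity ρ →
      ∑ i, (G' i * ((n' : ℂ)⁻¹ • 1) * (G' i)ᴴ).trace • (G i * ρ * (G i)ᴴ) = ρ :=
    fun ρ hρ => by
      conv_rhs => rw [← hcyl.2 ρ hρ, hF]
      simp [ptrace2_sum, kronecker_conj, ptrace2_kronecker]
  have hfactor : ∀ i, ∃ H, G i ⊗ₖ G' i = (1 : Matrix (Fin n) (Fin n) ℂ) ⊗ₖ H := fun i => by
    by_cases hG : G' i = 0
    · exact ⟨0, by simp [hG]⟩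
    obtain ⟨z, hz⟩ := exists_eq_smul_one_of_sum_trace_smul_conj_eq_self hn' G' G hid hG
    exact ⟨z • G' i, by rw [hz, kronecker_smul, smul_kronecker]⟩
  choose H hH using hfactor
  have hprod : ∀ σ, F (σ ⊗ₖ ρ') = σ ⊗ₖ (∑ i, H i * ρ' * (H i)ᴴ) := fun σ => by
    simp [hF, hH, kronecker_conj, kronecker_sum]
  rw [hprod, ← hcyl.1 ρ' hρ', hprod, ptrace1_kronecker, trace_inv_natCast_smul_one hn, one_smul]

end CylindricalExtension

lemma IsSuperOp.isDensity {d : Type} [Fintype d] [DecidableEq d]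
    {F : Matrix d d ℂ → Matrix d d ℂ} (hF : IsSuperOp F) {ρ : Matrix d d ℂ}
    (hρ : IsDensity ρ) : IsDensity (F ρ) :=
  ⟨hF.2.1 ρ hρ.1, (hF.2.2 ρ).trans hρ.2⟩

lemma purge_univ_eq_filter {Agent Cmd : Type} (G : Set Agent) (α : List (Agent × Cmd)) :
    purge G Set.univ α = α.filter fun p => p.1 ∉ G := by
  induction α with
  | nil => rfl
  | cons p α ih => by_cases hp : p.1 ∈ G <;> simp [purge, hp, ih]

namespace QSystem

variable {Agent Cmd d : Type}

def restrict (S : QSystem Agent Cmd d) (α : List (Agent × Cmd)) : List (Agent × Cmd) :=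
  α.filter fun p => p.1 ∈ S.A ∧ p.2 ∈ S.C

lemma valid_restrict (S : QSystem Agent Cmd d) (α : List (Agent × Cmd)) :
    S.Valid (S.restrict α) := fun p hp => by
  simpa [restrict] using (List.mem_filter.mp hp).2

lemma Valid.purge {S : QSystem Agent Cmd d} {α : List (Agent × Cmd)} (hα : S.Valid α)
    (G : Set Agent) : S.Valid (purge G Set.univ α) := fun p hp => by
  rw [purge_univ_eq_filter] at hp
  exact hα p (List.mem_filter.mp hp).1

lemma restrict_purge_nabla (S : QSystem Agent Cmd d) {pol₁ pol₂ : Agent → Agent → Prop}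
    {a : Agent} (h : ∀ b ∈ S.A, pol₁ b a ↔ pol₂ b a) (α : List (Agent × Cmd)) :
    S.restrict (purge (nabla pol₁ a) Set.univ α)
      = purge (nabla pol₂ a) Set.univ (S.restrict α) := by
  simp only [restrict, purge_univ_eq_filter, List.filter_filter]
  refine List.filter_congr fun p _ => ?_
  by_cases hp : p.1 ∈ S.A <;> simp [nabla, hp, h, Bool.and_comm]

lemma run_append (S : QSystem Agent Cmd d) (α β : List (Agent × Cmd)) (ρ : Matrix d d ℂ) :
    S.run (α ++ β) ρ = S.run β (S.run α ρ) :=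
  List.foldl_append

lemma run_isDensity [Fintype d] [DecidableEq d] {S : QSystem Agent Cmd d}
    (hS : ∀ a ∈ S.A, ∀ c ∈ S.C, IsSuperOp (S.Ecmd a c)) {α : List (Agent × Cmd)}
    (hα : S.Valid α) {ρ : Matrix d d ℂ} (hρ : IsDensity ρ) : IsDensity (S.run α ρ) := by
  induction α generalizing ρ with
  | nil => exact hρ
  | cons p α ih =>
    obtain ⟨ha, hc⟩ := hα p List.mem_cons_self
    exact ih (fun q hq => hα q (List.mem_cons_of_mem p hq)) ((hS p.1 ha p.2 hc).isDensity hρ)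

lemma run_sum_smul {S : QSystem Agent Cmd d} {α : List (Agent × Cmd)}
    (hlin : ∀ p ∈ α, IsLinearMap ℂ (S.Ecmd p.1 p.2)) {ι : Type} (s : Finset ι)
    (c : ι → ℂ) (X : ι → Matrix d d ℂ) :
    S.run α (∑ i ∈ s, c i • X i) = ∑ i ∈ s, c i • S.run α (X i) := by
  induction α generalizing X with
  | nil => rfl
  | cons p α ih =>
    have hstep : S.Ecmd p.1 p.2 (∑ i ∈ s, c i • X i)
        = ∑ i ∈ s, c i • S.Ecmd p.1 p.2 (X i) := by
      simpa only [map_smul, IsLinearMap.mk'_apply] using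
        map_sum (IsLinearMap.mk' _ (hlin p List.mem_cons_self)) (fun i => c i • X i) s
    exact (congrArg (S.run α) hstep).trans
      (ih (fun q hq => hlin q (List.mem_cons_of_mem p hq)) _)

end QSystem

namespace IsGenComp

variable {Agent Cmd : Type} {n n' : ℕ} {S : QSystem Agent Cmd (Fin n)}
  {S' : QSystem Agent Cmd (Fin n')} {T : QSystem Agent Cmd (Fin n × Fin n')}

lemma ecmd_kronecker (hn : 0 < n) (hn' : 0 < n') (hC : S.C ∩ S'.C = ∅)
    (hgen : IsGenComp S S' T) {a : Agent} {c : Cmd} (ha : a ∈ T.A) (hc : c ∈ T.C)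
    (hF : CommSeparableOp (T.Ecmd a c)) {ρ : Matrix (Fin n) (Fin n) ℂ}
    {ρ' : Matrix (Fin n') (Fin n') ℂ} (hρ : IsDensity ρ) (hρ' : IsDensity ρ') :
    T.Ecmd a c (ρ ⊗ₖ ρ')
      = S.run (S.restrict [(a, c)]) ρ ⊗ₖ S'.run (S'.restrict [(a, c)]) ρ' := by
  obtain ⟨hTA, hTC, -, -, -, hid, hcylL, hcylR, -⟩ := hgen
  rw [hTA] at ha
  rw [hTC] at hc
  have hdisj : c ∉ S.C ∨ c ∉ S'.C := not_and_or.mp fun h => hC.subset h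
  rcases hc with hcS | hcS'
  · have hcS' := hdisj.resolve_left (not_not.mpr hcS)
    by_cases haS : a ∈ S.A
    · simpa [QSystem.restrict, QSystem.run, haS, hcS, hcS'] using
        hF.apply_kronecker_of_cylExtLeft hn hn' (hcylL a haS c hcS) hρ ρ'
    · have haS' := ha.resolve_left haS
      simp [QSystem.restrict, QSystem.run, haS, hcS', hid a c (Or.inr ⟨⟨haS', haS⟩, hcS⟩)]
  · have hcS := hdisj.resolve_right (not_not.mpr hcS')
    by_cases haS' : a ∈ S'.A
    · simpa [QSystem.restrict, QSystem.run, haS', hcS, hcS'] using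
        hF.apply_kronecker_of_cylExtRight hn hn' (hcylR a haS' c hcS') ρ hρ'
    · have haS := ha.resolve_right haS'
      simp [QSystem.restrict, QSystem.run, haS', hcS, hid a c (Or.inl ⟨⟨haS, haS'⟩, hcS'⟩)]

lemma run_kronecker (hn : 0 < n) (hn' : 0 < n') (hS : S.WellFormed) (hS' : S'.WellFormed)
    (hC : S.C ∩ S'.C = ∅) (hgen : IsGenComp S S' T)
    (hops : ∀ a ∈ T.A, ∀ c ∈ T.C, CommSeparableOp (T.Ecmd a c)) {α : List (Agent × Cmd)}
    (hα : T.Valid α) {ρ : Matrix (Fin n) (Fin n) ℂ} {ρ' : Matrix (Fin n') (Fin n') ℂ}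
    (hρ : IsDensity ρ) (hρ' : IsDensity ρ') :
    T.run α (ρ ⊗ₖ ρ') = S.run (S.restrict α) ρ ⊗ₖ S'.run (S'.restrict α) ρ' := by
  induction α generalizing ρ ρ' with
  | nil => rfl
  | cons p α ih =>
    obtain ⟨ha, hc⟩ := hα p List.mem_cons_self
    have hsplit : ∀ {d : Type} (R : QSystem Agent Cmd d),
        R.restrict (p :: α) = R.restrict [p] ++ R.restrict α := fun R => by
      simp only [QSystem.restrict, ← List.filter_append, List.singleton_append]
    rw [hsplit, hsplit, QSystem.run_append, QSystem.run_append, ← ih]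
    · exact congrArg (T.run α) (ecmd_kronecker hn hn' hC hgen ha hc (hops _ ha _ hc) hρ hρ')
    · exact fun q hq => hα q (List.mem_cons_of_mem p hq)
    · exact QSystem.run_isDensity hS.2.1 (S.valid_restrict _) hρ
    · exact QSystem.run_isDensity hS'.2.1 (S'.valid_restrict _) hρ'

lemma run_separable (hn : 0 < n) (hn' : 0 < n') (hS : S.WellFormed) (hS' : S'.WellFormed)
    (hC : S.C ∩ S'.C = ∅) (hgen : IsGenComp S S' T)
    (hops : ∀ a ∈ T.A, ∀ c ∈ T.C, CommSeparableOp (T.Ecmd a c)) {α : List (Agent × Cmd)}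
    (hα : T.Valid α) {m : ℕ} (p : Fin m → ℝ) {ρ : Fin m → Matrix (Fin n) (Fin n) ℂ}
    {ρ' : Fin m → Matrix (Fin n') (Fin n') ℂ} (hρ : ∀ i, IsDensity (ρ i))
    (hρ' : ∀ i, IsDensity (ρ' i)) :
    T.run α (∑ i, (p i : ℂ) • (ρ i ⊗ₖ ρ' i))
      = ∑ i, (p i : ℂ) • (S.run (S.restrict α) (ρ i) ⊗ₖ S'.run (S'.restrict α) (ρ' i)) := by
  rw [QSystem.run_sum_smul (fun q hq => (hops _ (hα q hq).1 _ (hα q hq).2).isLinearMap)]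
  simp only [run_kronecker hn hn' hS hS' hC hgen hops hα (hρ _) (hρ' _)]

end IsGenComp

lemma polUnion_iff_left {Agent : Type} {A A' : Set Agent} {pol pol' : Agent → Agent → Prop}
    (hcompat : Compatible A A' pol pol') {a b : Agent} (ha : a ∈ A) (hb : b ∈ A) :
    polUnion A A' pol pol' b a ↔ pol b a :=
  ⟨fun h => h.elim (fun h => h.2.2) fun h => (hcompat b ⟨hb, h.1⟩ a ⟨ha, h.2.1⟩).mpr h.2.2,
    fun h => Or.inl ⟨hb, ha, h⟩⟩

lemma polUnion_iff_right {Agent : Type} {A A' : Set Agent} {pol pol' : Agent → Agent → Prop}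
    (hcompat : Compatible A A' pol pol') {a b : Agent} (ha : a ∈ A') (hb : b ∈ A') :
    polUnion A A' pol pol' b a ↔ pol' b a :=
  ⟨fun h => h.elim (fun h => (hcompat b ⟨h.1, hb⟩ a ⟨h.2.1, ha⟩).mp h.2.2) fun h => h.2.2,
    fun h => Or.inr ⟨hb, ha, h⟩⟩

section Distances

variable {d : Type} [Fintype d]

lemma dE_nonneg (P : PMeas d) (ρ σ : Matrix d d ℂ) : 0 ≤ dE P ρ σ := by
  unfold dE
  positivity

lemma PMeas.IsPOVM.sum_norm_trace_mul [DecidableEq d] {P : PMeas d} (hP : P.IsPOVM)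
    {ρ : Matrix d d ℂ} (hρ : IsDensity ρ) : ∑ i, ‖(P.E i * ρ).trace‖ = 1 := by
  have hre : ∀ i, ‖(P.E i * ρ).trace‖ = (P.E i * ρ).trace.re := fun i =>
    (Complex.re_eq_norm.mpr ((hP.1 i).trace_mul_nonneg hρ.1)).symm
  rw [Finset.sum_congr rfl fun i _ => hre i, ← Complex.re_sum, ← trace_sum, ← Finset.sum_mul,
    hP.2, Matrix.one_mul, hρ.2, Complex.one_re]

lemma dE_le_one [DecidableEq d] {P : PMeas d} (hP : P.IsPOVM) {ρ σ : Matrix d d ℂ}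
    (hρ : IsDensity ρ) (hσ : IsDensity σ) : dE P ρ σ ≤ 1 := by
  have h := Finset.sum_le_sum fun i (_ : i ∈ Finset.univ) =>
    norm_sub_le (P.E i * ρ).trace (P.E i * σ).trace
  rw [Finset.sum_add_distrib, hP.sum_norm_trace_mul hρ, hP.sum_norm_trace_mul hσ] at h
  unfold dE
  linarith

lemma dM_nonneg (M : Set (PMeas d)) (ρ σ : Matrix d d ℂ) : 0 ≤ dM M ρ σ :=
  Real.sSup_nonneg fun _ ⟨P, _, hx⟩ => hx ▸ dE_nonneg P ρ σ

lemma dM_le_one [DecidableEq d] {M : Set (PMeas d)} (hM : ∀ P ∈ M, P.IsPOVM)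
    {ρ σ : Matrix d d ℂ} (hρ : IsDensity ρ) (hσ : IsDensity σ) : dM M ρ σ ≤ 1 :=
  Real.sSup_le (fun _ ⟨P, hP, hx⟩ => hx ▸ dE_le_one (hM P hP) hρ hσ) zero_le_one

lemma dE_le_dM [DecidableEq d] {M : Set (PMeas d)} (hM : ∀ P ∈ M, P.IsPOVM)
    {ρ σ : Matrix d d ℂ} (hρ : IsDensity ρ) (hσ : IsDensity σ) {P : PMeas d}
    (hP : P ∈ M) : dE P ρ σ ≤ dM M ρ σ :=
  le_csSup ⟨1, fun _ ⟨Q, hQ, hx⟩ => hx ▸ dE_le_one (hM Q hQ) hρ hσ⟩ ⟨P, hP, rfl⟩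

lemma dE_sum_smul_le (P : PMeas d) {m : ℕ} {p : Fin m → ℝ} (hp : ∀ i, 0 ≤ p i)
    (X Y : Fin m → Matrix d d ℂ) :
    dE P (∑ i, (p i : ℂ) • X i) (∑ i, (p i : ℂ) • Y i) ≤ ∑ i, p i * dE P (X i) (Y i) := by
  have hterm : ∀ l, ‖(P.E l * ∑ i, (p i : ℂ) • X i).trace
      - (P.E l * ∑ i, (p i : ℂ) • Y i).trace‖
      ≤ ∑ i, p i * ‖(P.E l * X i).trace - (P.E l * Y i).trace‖ := fun l => by
    simp only [Matrix.mul_sum, Matrix.mul_smul, trace_sum, trace_smul,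
      ← Finset.sum_sub_distrib, ← smul_sub]
    refine (norm_sum_le _ _).trans_eq (Finset.sum_congr rfl fun i _ => ?_)
    rw [norm_smul, Complex.norm_real, Real.norm_of_nonneg (hp i)]
  unfold dE
  refine (mul_le_mul_of_nonneg_left (Finset.sum_le_sum fun l _ => hterm l)
    (by norm_num)).trans_eq ?_
  rw [Finset.sum_comm]
  simp only [Finset.mul_sum]
  exact Finset.sum_congr rfl fun i _ => Finset.sum_congr rfl fun l _ => by ring

lemma dE_liftLeft_kronecker {d' : Type} [Fintype d'] [DecidableEq d'] (Q : PMeas d)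
    (x y : Matrix d d ℂ) {x' y' : Matrix d' d' ℂ} (hx' : x'.trace = 1) (hy' : y'.trace = 1) :
    dE (Q.liftLeft (d2 := d')) (x ⊗ₖ x') (y ⊗ₖ y') = dE Q x y := by
  simp [dE, PMeas.liftLeft, ← mul_kronecker_mul, trace_kronecker, hx', hy']
  rfl

lemma dE_liftRight_kronecker {d' : Type} [Fintype d'] [DecidableEq d'] (Q : PMeas d)
    {x y : Matrix d' d' ℂ} (x' y' : Matrix d d ℂ) (hx : x.trace = 1) (hy : y.trace = 1) :
    dE (Q.liftRight (d1 := d')) (x ⊗ₖ x') (y ⊗ₖ y') = dE Q x' y' := by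
  simp [dE, PMeas.liftRight, ← mul_kronecker_mul, trace_kronecker, hx, hy]
  rfl

end Distances

section Degrees

variable {Agent Cmd d : Type} [Fintype d] [DecidableEq d] {S : QSystem Agent Cmd d}

lemma QSystem.WellFormed.withInit (hS : S.WellFormed) {ρ : Matrix d d ℂ} (hρ : IsDensity ρ) :
    (S.withInit ρ).WellFormed :=
  ⟨hρ, hS.2⟩

omit [DecidableEq d] in
lemma Kdeg_nonneg (S : QSystem Agent Cmd d) (pol : Agent → Agent → Prop) : 0 ≤ Kdeg S pol :=
  Real.sSup_nonneg fun _ ⟨_, _, _, _, hx⟩ => hx ▸ dM_nonneg _ _ _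

lemma Kdeg_le_one (hS : S.WellFormed) (pol : Agent → Agent → Prop) : Kdeg S pol ≤ 1 :=
  Real.sSup_le (fun _ ⟨a, ha, _, hα, hx⟩ => hx ▸ dM_le_one (hS.2.2 a ha)
    (QSystem.run_isDensity hS.2.1 hα hS.1) (QSystem.run_isDensity hS.2.1 (hα.purge _) hS.1))
    zero_le_one

lemma dM_le_Kdeg (hS : S.WellFormed) (pol : Agent → Agent → Prop) {a : Agent} (ha : a ∈ S.A)
    {α : List (Agent × Cmd)} (hα : S.Valid α) :
    dM (S.M a) (S.run α S.ρ0) (S.run (purge (nabla pol a) Set.univ α) S.ρ0) ≤ Kdeg S pol :=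
  le_csSup ⟨1, fun _ ⟨b, hb, _, hβ, hx⟩ => hx ▸ dM_le_one (hS.2.2 b hb)
    (QSystem.run_isDensity hS.2.1 hβ hS.1) (QSystem.run_isDensity hS.2.1 (hβ.purge _) hS.1)⟩
    ⟨a, ha, α, hα, rfl⟩

lemma SK_nonneg (S : QSystem Agent Cmd d) (pol : Agent → Agent → Prop) : 0 ≤ SK S pol :=
  Real.sSup_nonneg fun _ ⟨_, _, _, hp, _, _, _, hx⟩ =>
    hx ▸ Finset.sum_nonneg fun i _ => mul_nonneg (hp i) (Kdeg_nonneg _ _)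

variable (pol : Agent → Agent → Prop) {m : ℕ} {p : Fin m → ℝ} {ρ : Fin m → Matrix d d ℂ}

lemma sum_mul_Kdeg_le_SK (hS : S.WellFormed) (hp0 : ∀ i, 0 ≤ p i) (hp1 : ∑ i, p i = 1)
    (hρ : ∀ i, IsDensity (ρ i)) (hdec : S.ρ0 = ∑ i, (p i : ℂ) • ρ i) :
    ∑ i, p i * Kdeg (S.withInit (ρ i)) pol ≤ SK S pol := by
  refine le_csSup ⟨1, ?_⟩ ⟨m, p, ρ, hp0, hp1, hρ, hdec, rfl⟩
  rintro _ ⟨m', q, σ, hq0, hq1, hσ, -, rfl⟩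
  calc ∑ i, q i * Kdeg (S.withInit (σ i)) pol ≤ ∑ i, q i * 1 :=
        Finset.sum_le_sum fun i _ =>
          mul_le_mul_of_nonneg_left (Kdeg_le_one (hS.withInit (hσ i)) pol) (hq0 i)
    _ = 1 := by simp [hq1]

lemma sum_mul_dE_le_SK (hS : S.WellFormed) (hp0 : ∀ i, 0 ≤ p i) (hp1 : ∑ i, p i = 1)
    (hρ : ∀ i, IsDensity (ρ i)) (hdec : S.ρ0 = ∑ i, (p i : ℂ) • ρ i) {a : Agent}
    (ha : a ∈ S.A) {Q : PMeas d} (hQ : Q ∈ S.M a) {α : List (Agent × Cmd)} (hα : S.Valid α) :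
    ∑ i, p i * dE Q (S.run α (ρ i)) (S.run (purge (nabla pol a) Set.univ α) (ρ i))
      ≤ SK S pol := by
  refine le_trans (Finset.sum_le_sum fun i _ => mul_le_mul_of_nonneg_left ?_ (hp0 i))
    (sum_mul_Kdeg_le_SK pol hS hp0 hp1 hρ hdec)
  exact (dE_le_dM (hS.2.2 a ha) (QSystem.run_isDensity hS.2.1 hα (hρ i))
    (QSystem.run_isDensity hS.2.1 (hα.purge _) (hρ i)) hQ).trans
    (dM_le_Kdeg (hS.withInit (hρ i)) pol ha hα)

lemma dE_liftLeft_le_SK {d' : Type} [Fintype d'] [DecidableEq d'] (hS : S.WellFormed)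
    (hp0 : ∀ i, 0 ≤ p i) (hp1 : ∑ i, p i = 1) (hρ : ∀ i, IsDensity (ρ i))
    (hdec : S.ρ0 = ∑ i, (p i : ℂ) • ρ i) {a : Agent} (ha : a ∈ S.A) {Q : PMeas d}
    (hQ : Q ∈ S.M a) {α : List (Agent × Cmd)} (hα : S.Valid α)
    {x' y' : Fin m → Matrix d' d' ℂ} (hx' : ∀ i, (x' i).trace = 1)
    (hy' : ∀ i, (y' i).trace = 1) :
    dE (Q.liftLeft (d2 := d')) (∑ i, (p i : ℂ) • (S.run α (ρ i) ⊗ₖ x' i))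
      (∑ i, (p i : ℂ) • (S.run (purge (nabla pol a) Set.univ α) (ρ i) ⊗ₖ y' i))
      ≤ SK S pol := by
  refine (dE_sum_smul_le _ hp0 _ _).trans ?_
  simp only [dE_liftLeft_kronecker _ _ _ (hx' _) (hy' _)]
  exact sum_mul_dE_le_SK pol hS hp0 hp1 hρ hdec ha hQ hα

lemma dE_liftRight_le_SK {d' : Type} [Fintype d'] [DecidableEq d'] (hS : S.WellFormed)
    (hp0 : ∀ i, 0 ≤ p i) (hp1 : ∑ i, p i = 1) (hρ : ∀ i, IsDensity (ρ i))
    (hdec : S.ρ0 = ∑ i, (p i : ℂ) • ρ i) {a : Agent} (ha : a ∈ S.A) {Q : PMeas d}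
    (hQ : Q ∈ S.M a) {α : List (Agent × Cmd)} (hα : S.Valid α)
    {x y : Fin m → Matrix d' d' ℂ} (hx : ∀ i, (x i).trace = 1) (hy : ∀ i, (y i).trace = 1) :
    dE (Q.liftRight (d1 := d')) (∑ i, (p i : ℂ) • (x i ⊗ₖ S.run α (ρ i)))
      (∑ i, (p i : ℂ) • (y i ⊗ₖ S.run (purge (nabla pol a) Set.univ α) (ρ i)))
      ≤ SK S pol := by
  refine (dE_sum_smul_le _ hp0 _ _).trans ?_
  simp only [dE_liftRight_kronecker _ _ _ (hx _) (hy _)]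
  exact sum_mul_dE_le_SK pol hS hp0 hp1 hρ hdec ha hQ hα

end Degrees

theorem gen_compositionality_K_general {Agent Cmd : Type} {n n' : ℕ}
    (hn : 0 < n) (hn' : 0 < n')
    (S : QSystem Agent Cmd (Fin n)) (S' : QSystem Agent Cmd (Fin n'))
    (T : QSystem Agent Cmd (Fin n × Fin n'))
    (hS : S.WellFormed) (hS' : S'.WellFormed)
    (hC : S.C ∩ S'.C = ∅)
    (pol pol' : Agent → Agent → Prop)
    (hcompat : Compatible S.A S'.A pol pol')
    (hgen : IsGenComp S S' T)
    (hsep : SeparableState T.ρ0)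
    (hops : ∀ a ∈ T.A, ∀ c ∈ T.C, CommSeparableOp (T.Ecmd a c)) :
    Kdeg T (polUnion S.A S'.A pol pol') ≤ SK S pol + SK S' pol' := by
  obtain ⟨m, p, ρ, ρ', hp0, hp1, hρ, hρ', hσ0⟩ := hsep
  obtain ⟨-, -, -, hmarg, hmarg', -, -, -, hM⟩ := id hgen
  have hdec : S.ρ0 = ∑ i, (p i : ℂ) • ρ i := by
    rw [← hmarg, hσ0, ptrace2_sum_smul_kronecker _ _ fun i => (hρ' i).2]
  have hdec' : S'.ρ0 = ∑ i, (p i : ℂ) • ρ' i := by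
    rw [← hmarg', hσ0, ptrace1_sum_smul_kronecker _ (fun i => (hρ i).2)]
  have htr : ∀ β i, (S.run (S.restrict β) (ρ i)).trace = 1 := fun β i =>
    (QSystem.run_isDensity hS.2.1 (S.valid_restrict β) (hρ i)).2
  have htr' : ∀ β i, (S'.run (S'.restrict β) (ρ' i)).trace = 1 := fun β i =>
    (QSystem.run_isDensity hS'.2.1 (S'.valid_restrict β) (hρ' i)).2
  have hbound := add_nonneg (SK_nonneg S pol) (SK_nonneg S' pol')
  refine Real.sSup_le ?_ hbound
  rintro _ ⟨a, -, α, hα, rfl⟩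
  refine Real.sSup_le ?_ hbound
  rintro _ ⟨P, hP, rfl⟩
  rw [hσ0, hgen.run_separable hn hn' hS hS' hC hops hα p hρ hρ',
    hgen.run_separable hn hn' hS hS' hC hops (hα.purge _) p hρ hρ']
  rw [hM a] at hP
  rcases hP with hP | hP <;> split_ifs at hP with ha
  · obtain ⟨Q, hQ, rfl⟩ := hP
    rw [S.restrict_purge_nabla fun b hb => polUnion_iff_left hcompat ha hb]
    exact (dE_liftLeft_le_SK pol hS hp0 hp1 hρ hdec ha hQ (S.valid_restrict α) (htr' α)
      (htr' _)).trans (le_add_of_nonneg_right (SK_nonneg S' pol'))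
  · exact hP.elim
  · obtain ⟨Q, hQ, rfl⟩ := hP
    rw [S'.restrict_purge_nabla fun b hb => polUnion_iff_right hcompat ha hb]
    exact (dE_liftRight_le_SK pol' hS' hp0 hp1 hρ' hdec' ha hQ (S'.valid_restrict α) (htr α)
      (htr _)).trans (le_add_of_nonneg_left (SK_nonneg S pol))
  · exact hP.elim

/-- **Compositionality for generalised composition (unbounded time).** If `𝕋` is a
generalised composition of `𝕊` and `𝕊′` with separable initial state and commutative
separable super-operators, then `K(𝕋, ↝ ∪ ↝′) ≤ SK(𝕊, ↝) + SK(𝕊′, ↝′)`. -/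
theorem gen_compositionality_K {Agent Cmd : Type} {n n' : ℕ}
    (hn : 0 < n) (hn' : 0 < n')
    (S : QSystem Agent Cmd (Fin n)) (S' : QSystem Agent Cmd (Fin n'))
    (T : QSystem Agent Cmd (Fin n × Fin n'))
    (hS : S.WellFormed) (hS' : S'.WellFormed) (hT : T.WellFormed)
    (hC : S.C ∩ S'.C = ∅)
    (pol pol' : Agent → Agent → Prop)
    (hpol : ∀ a ∈ S.A, pol a a) (hpol' : ∀ a ∈ S'.A, pol' a a)
    (hcompat : Compatible S.A S'.A pol pol')
    (hgen : IsGenComp S S' T)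
    (hsep : SeparableState T.ρ0)
    (hops : ∀ a ∈ T.A, ∀ c ∈ T.C, CommSeparableOp (T.Ecmd a c)) :
    Kdeg T (polUnion S.A S'.A pol pol') ≤ SK S pol + SK S' pol' :=
  gen_compositionality_K_general hn hn' S S' T hS hS' hC pol pol' hcompat hgen hsep hops

end
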